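/- For every k ≥ 0, if H_0,…,H_k are nowhere zero then the operator identity (T_j − b_{k+1}·)∘L_k = L_{k+1}∘(T_j − T_i^{-1}(b_k)·) holds on 𝔊; moreover, for every k ≥ 1 (with H_0,…,H_{k-1} nowhere zero), L_k = (T_j − b_k·)∘(T_i − T_j^{k-1}(b)·) − (T_j(H_{k-1}))·. -/

import Mathlib

/-!
Discrete (quad-graph) setting: the space `𝔊` is modelled by `QG = ℤ → ℤ → ℝ`
(functions `φ(i,j)`), with the shifts `Ti`, `Tj`, their inverses, and the
`k`-fold shifts `TiZ k`, `TjZ k`.  For `g : QG`, pointwise multiplication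
`g * φ` models the operator `g·`.
-/

/-- The function space `𝔊` of functions `ℤ² → ℝ`. -/
abbrev QG : Type := ℤ → ℤ → ℝ

namespace QG

noncomputable section

/-- The shift operator `T_i(φ)(i,j) = φ(i+1,j)`. -/
def Ti (φ : QG) : QG := fun i j => φ (i + 1) j

/-- The shift operator `T_j(φ)(i,j) = φ(i,j+1)`. -/
def Tj (φ : QG) : QG := fun i j => φ i (j + 1)

/-- The `k`-fold shift in `i`. -/
def TiZ (k : ℤ) (φ : QG) : QG := fun i j => φ (i + k) j

/-- The `k`-fold shift in `j`. -/
def TjZ (k : ℤ) (φ : QG) : QG := fun i j => φ i (j + k)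

/-- The inverse shift `T_i⁻¹`. -/
def TiInv (φ : QG) : QG := fun i j => φ (i - 1) j

/-- The inverse shift `T_j⁻¹`. -/
def TjInv (φ : QG) : QG := fun i j => φ i (j - 1)

/-- A function that is nowhere zero. -/
def NowhereZero (φ : QG) : Prop := ∀ i j, φ i j ≠ 0

/-- The linearization operator `L = T_i∘T_j − a·T_i − b·T_j − c·`. -/
def L (a b c : QG) (φ : QG) : QG := Ti (Tj φ) - a * Ti φ - b * Tj φ - c * φ

/-- The pair `(b_k, H_k)` of the Laplace j-transformations:
`b_0 = a`, `H_0 = c + b·T_i⁻¹(a)`,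
`b_{k+1} = T_i⁻¹(b_k)·T_j(H_k)/H_k`,
`H_{k+1} = T_j(H_k) − T_j^k(b)·b_{k+1} + T_j^{k+1}(b)·T_i⁻¹(b_{k+1})`. -/
def bH (a b c : QG) : ℕ → QG × QG
  | 0 => (a, c + b * TiInv a)
  | k + 1 =>
      let bk := TiInv (bH a b c k).1 * Tj (bH a b c k).2 / (bH a b c k).2
      (bk, Tj (bH a b c k).2 - TjZ (k : ℤ) b * bk + TjZ ((k : ℤ) + 1) b * TiInv bk)

/-- The function `b_k`. -/
def bj (a b c : QG) (k : ℕ) : QG := (bH a b c k).1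

/-- The Laplace j-invariant `H_k`. -/
def Hj (a b c : QG) (k : ℕ) : QG := (bH a b c k).2

/-- The operator `L_k`: `L_0 = L` and
`L_k = (T_i − T_j^k(b)·)∘(T_j − T_i⁻¹(b_k)·) − H_k·` for `k ≥ 1`. -/
def Lk (a b c : QG) : ℕ → QG → QG
  | 0, φ => L a b c φ
  | k + 1, φ =>
      Ti (Tj φ - TiInv (bj a b c (k + 1)) * φ)
        - TjZ ((k : ℤ) + 1) b * (Tj φ - TiInv (bj a b c (k + 1)) * φ)
        - Hj a b c (k + 1) * φ

/-- `Bo (k+1)` is the operator `B_k = (T_j − T_i⁻¹(b_k)·)∘B_{k-1}`; `Bo 0 = id` is `B_{-1}`. -/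
def Bo (a b c : QG) : ℕ → QG → QG
  | 0, φ => φ
  | k + 1, φ => Tj (Bo a b c k φ) - TiInv (bj a b c k) * Bo a b c k φ

/-- `Bbar k` is the operator `B̄_k`: `B̄_0 = id`, `B̄_k = (T_j − b_k·)∘B̄_{k-1}`. -/
def Bbar (a b c : QG) : ℕ → QG → QG
  | 0, φ => φ
  | k + 1, φ => Tj (Bbar a b c k φ) - bj a b c (k + 1) * Bbar a b c k φ

/-- `Rchain p` is the composition
`((1/H_0)·)∘(T_i − b·)∘((1/H_1)·)∘(T_i − T_j(b)·)∘···∘((1/H_{p-1})·)∘(T_i − T_j^{p-1}(b)·)`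
(the identity for `p = 0`). -/
def Rchain (a b c : QG) : ℕ → QG → QG
  | 0, φ => φ
  | k + 1, φ => Rchain a b c k ((1 / Hj a b c k) * (Ti φ - TjZ (k : ℤ) b * φ))

end

theorem Ti_sub (φ ψ : QG) : Ti (φ - ψ) = Ti φ - Ti ψ := rfl

theorem Ti_mul (φ ψ : QG) : Ti (φ * ψ) = Ti φ * Ti ψ := rfl

theorem Tj_sub (φ ψ : QG) : Tj (φ - ψ) = Tj φ - Tj ψ := rfl

theorem Tj_mul (φ ψ : QG) : Tj (φ * ψ) = Tj φ * Tj ψ := rfl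

theorem Ti_TiInv (φ : QG) : Ti (TiInv φ) = φ := by
  funext i j
  simp [Ti, TiInv]

theorem Ti_Tj_comm (φ : QG) : Ti (Tj φ) = Tj (Ti φ) := rfl

theorem TjZ_zero (φ : QG) : TjZ 0 φ = φ := by
  funext i j
  simp [TjZ]

theorem Tj_TjZ (k : ℤ) (φ : QG) : Tj (TjZ k φ) = TjZ (k + 1) φ := by
  funext i j
  simp only [Tj, TjZ]
  ring_nf

section Laplace

variable (a b c : QG)

theorem bj_succ (k : ℕ) :
    bj a b c (k + 1) = TiInv (bj a b c k) * Tj (Hj a b c k) / Hj a b c k := rfl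

theorem Hj_succ (k : ℕ) :
    Hj a b c (k + 1)
      = Tj (Hj a b c k) - TjZ (k : ℤ) b * bj a b c (k + 1)
          + TjZ ((k : ℤ) + 1) b * TiInv (bj a b c (k + 1)) := rfl

theorem bj_succ_mul_Hj {k : ℕ} (hH : NowhereZero (Hj a b c k)) :
    bj a b c (k + 1) * Hj a b c k = TiInv (bj a b c k) * Tj (Hj a b c k) := by
  funext i j
  simp only [bj_succ, Pi.mul_apply, Pi.div_apply]
  field_simp [hH i j]

/-- For `k = 0` this is `L = (T_i − b·)∘(T_j − T_i⁻¹(a)·) − H_0·`, the origin of the formula for `H_0`. -/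
theorem Lk_eq_Ti_comp_Tj (k : ℕ) (φ : QG) :
    Lk a b c k φ
      = Ti (Tj φ - TiInv (bj a b c k) * φ)
          - TjZ (k : ℤ) b * (Tj φ - TiInv (bj a b c k) * φ)
          - Hj a b c k * φ := by
  cases k with
  | zero =>
    simp only [Lk, L, Ti_sub, Ti_mul, Ti_TiInv, Nat.cast_zero, TjZ_zero]
    simp only [bj, Hj, bH]
    ring
  | succ k => simp only [Lk, Nat.cast_add, Nat.cast_one]

/-- `H_{k+1}` is defined exactly so that `L_{k+1}` also factors the other way round. -/
theorem Lk_succ_eq_Tj_comp_Ti (k : ℕ) (φ : QG) :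
    Lk a b c (k + 1) φ
      = Tj (Ti φ - TjZ (k : ℤ) b * φ)
          - bj a b c (k + 1) * (Ti φ - TjZ (k : ℤ) b * φ)
          - Tj (Hj a b c k) * φ := by
  rw [Lk_eq_Ti_comp_Tj, Hj_succ]
  simp only [Ti_sub, Ti_mul, Ti_TiInv, Tj_sub, Tj_mul, Tj_TjZ, Ti_Tj_comm, Nat.cast_add,
    Nat.cast_one]
  ring

/-- Both sides equal `(T_j − b_{k+1})(T_i − T_j^k b)(T_j − T_i⁻¹ b_k)` up to a multiplication
term, and the two multiplication terms agree by `bj_succ_mul_Hj`. -/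
theorem Tj_sub_bj_comp_Lk {k : ℕ} (hH : NowhereZero (Hj a b c k)) (φ : QG) :
    Tj (Lk a b c k φ) - bj a b c (k + 1) * Lk a b c k φ
      = Lk a b c (k + 1) (Tj φ - TiInv (bj a b c k) * φ) := by
  rw [Lk_eq_Ti_comp_Tj a b c k, Lk_succ_eq_Tj_comp_Ti, Tj_sub, Tj_mul]
  linear_combination φ * bj_succ_mul_Hj a b c hH

end Laplace

/-- For every `k ≥ 0`, if `H_0, …, H_k` are nowhere zero then the operator
identity `(T_j − b_{k+1}·)∘L_k = L_{k+1}∘(T_j − T_i⁻¹(b_k)·)` holds on `𝔊`; moreover,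
for every `k ≥ 1` (with `H_0, …, H_{k-1}` nowhere zero),
`L_k = (T_j − b_k·)∘(T_i − T_j^{k-1}(b)·) − (T_j(H_{k-1}))·`. -/
theorem statement9 (a b c : QG) :
    (∀ k : ℕ, (∀ m, m ≤ k → NowhereZero (Hj a b c m)) →
      ∀ φ : QG,
        Tj (Lk a b c k φ) - bj a b c (k + 1) * Lk a b c k φ
          = Lk a b c (k + 1) (Tj φ - TiInv (bj a b c k) * φ)) ∧
    (∀ k : ℕ, 1 ≤ k → (∀ m, m < k → NowhereZero (Hj a b c m)) →
      ∀ φ : QG,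
        Lk a b c k φ
          = Tj (Ti φ - TjZ ((k : ℤ) - 1) b * φ)
              - bj a b c k * (Ti φ - TjZ ((k : ℤ) - 1) b * φ)
              - Tj (Hj a b c (k - 1)) * φ) := by
  refine ⟨fun k hH φ => Tj_sub_bj_comp_Lk a b c (hH k le_rfl) φ, fun k hk _ φ => ?_⟩
  obtain ⟨k, rfl⟩ := Nat.exists_eq_add_of_le' hk
  simpa using Lk_succ_eq_Tj_comp_Ti a b c k φ

end QG
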